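/- arXiv:math/0504269 — 3 statements merged into one kernel-verified Lean document; each statement's English description precedes it below -/
import Mathlib

section
/- If $C$ is a symmetrizable generalized Cartan matrix with positive integer symmetrizers $(r_i)$ satisfying ($C_{i,j} < -1 \Rightarrow r_i = -C_{j,i} = 1$), then for every $i$ with $r_i > 1$ and every $j$ with $C_{i,j} < 0$, either ($C_{j,i} = -1$ and $r_i = r_j$) or ($C_{j,i} = -r_i$ and $r_j = 1$). -/
/-- If `C` is a symmetrizable generalized Cartan matrix with positive
integer symmetrizers `r_i` (`r_i C_{i,j} = r_j C_{j,i}`) satisfying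
(`C_{i,j} < -1 ⇒ r_i = 1 ∧ C_{j,i} = -1`), then for every `i` with `r_i > 1` and
every `j` with `C_{i,j} < 0`, either (`C_{j,i} = -1` and `r_i = r_j`) or
(`C_{j,i} = -r_i` and `r_j = 1`). -/
theorem stmt7 (n : ℕ) (C : Fin n → Fin n → ℤ) (r : Fin n → ℤ)
    (hdiag : ∀ i, C i i = 2)
    (hoff : ∀ i j, i ≠ j → C i j ≤ 0)
    (hzero : ∀ i j, C i j = 0 ↔ C j i = 0)
    (hrpos : ∀ i, 0 < r i)
    (hsym : ∀ i j, r i * C i j = r j * C j i)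
    (hcond : ∀ i j, C i j < -1 → r i = 1 ∧ C j i = -1) :
    ∀ i j, 1 < r i → C i j < 0 →
      (C j i = -1 ∧ r i = r j) ∨ (C j i = -(r i) ∧ r j = 1) := by
  intro i j hri hCij
  -- C i j = -1, else hcond gives r i = 1, contradicting 1 < r i
  have hCij1 : C i j = -1 := by
    by_contra h
    have : C i j < -1 := lt_of_le_of_ne (by omega) h
    have := (hcond i j this).1
    omega
  have hs := hsym i j
  rw [hCij1] at hs
  -- r j * C j i = -(r i) < 0
  have hji_neg : C j i < 0 := by
    rcases lt_trichotomy (C j i) 0 with h | h | h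
    · exact h
    · exfalso; rw [h, mul_zero] at hs; have := hrpos i; omega
    · exfalso; nlinarith [hrpos i, hrpos j]
  rcases eq_or_lt_of_le (show C j i ≤ -1 by omega) with h | h
  · left
    constructor
    · omega
    · rw [← h] at hs; nlinarith
  · right
    obtain ⟨hrj, _⟩ := hcond j i (by omega)
    rw [hrj, one_mul] at hs
    exact ⟨by omega, hrj⟩
end

section
/- Let $C$ be a symmetrizable generalized Cartan matrix with positive integer symmetrizers $(r_i)$ and let $C(q)$ be the quantized Cartan matrix over $\mathbb{Z}[q, q^{-1}]$ defined by $C_{i,i}(q) = q^{r_i} + q^{-r_i}$ and $C_{i,j}(q) = [C_{i,j}]_q$ for $i \ne j$, where $[l]_q = (q^l - q^{-l})/(q - q^{-1})$. If $r_i \ge -C_{j,i}$ for all $i,j$, then $\det(C(q))$, as a Laurent polynomial in $q$, has leading term $q^R$ and lowest term $q^{-R}$ where $R = \sum_{i} r_i$; in particular $\det(C(q)) \ne 0$. -/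
open LaurentPolynomial

/-- The quantum integer `[l]_q = (q^l - q^{-l})/(q - q^{-1})`, as a Laurent polynomial
in `ℤ[q^{±1}]`: for `l ≥ 0` it is `q^{l-1} + q^{l-3} + ⋯ + q^{-(l-1)}`, and
`[-l]_q = -[l]_q`. -/
noncomputable def qint (l : ℤ) : LaurentPolynomial ℤ :=
  if 0 ≤ l then ∑ s ∈ Finset.range l.toNat, T (l - 1 - 2 * s)
  else -∑ s ∈ Finset.range (-l).toNat, T (-l - 1 - 2 * s)

/-!
Expand `det C(q)` over permutations. An off-diagonal entry `[C_{ij}]_q` with `C_{ij} ≤ 0` has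
degree at most `-C_{ij} - 1 ≤ r_j - 1`, while the diagonal entry `q^{r_j} + q^{-r_j}` has degree
`r_j` and leading coefficient `1`. Every permutation other than the identity uses an off-diagonal
entry, so its term has degree `< R`; the identity term has degree `R` and leading coefficient `1`.
The bar involution `q ↦ q⁻¹` fixes every entry, hence the determinant, which turns the statement
about the top coefficients into the one about the bottom coefficients.
-/

namespace LaurentPolynomial

variable {R : Type*}

section Semiring

variable [Semiring R]

theorem degree_le_iff_coeff_eq_zero {f : R[T;T⁻¹]} {d : ℤ} :
    f.degree ≤ d ↔ ∀ m, d < m → f.coeff m = 0 := by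
  refine ⟨fun h m hm => ?_, fun h => Finset.max_le fun m hm => ?_⟩
  · by_contra hne
    have := (Finset.le_max (Finsupp.mem_support_iff.mpr hne)).trans h
    exact absurd (WithBot.coe_le_coe.mp this) hm.not_ge
  · by_contra hlt
    exact Finsupp.mem_support_iff.mp hm (h m (WithBot.coe_lt_coe.mp (not_le.mp hlt)))

theorem coeff_eq_zero_of_degree_lt {f : R[T;T⁻¹]} {m : ℤ} (h : f.degree < m) : f.coeff m = 0 := by
  by_contra hne
  exact (Finset.le_max (Finsupp.mem_support_iff.mpr hne)).not_gt h

theorem degree_eq_supDegree (f : R[T;T⁻¹]) : f.degree = f.supDegree ((↑) : ℤ → WithBot ℤ) :=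
  Finset.max_eq_sup_withBot _

theorem coeff_mul_of_degree_le {f g : R[T;T⁻¹]} {a b : ℤ} (hf : f.degree ≤ a)
    (hg : g.degree ≤ b) : (f * g).coeff (a + b) = f.coeff a * g.coeff b := by
  refine AddMonoidAlgebra.coeff_mul_add_of_uniqueAdd fun {a' b'} ha' hb' hab => ?_
  have ha := WithBot.coe_le_coe.mp ((Finset.le_max ha').trans hf)
  have hb := WithBot.coe_le_coe.mp ((Finset.le_max hb').trans hg)
  omega

end Semiring

section CommSemiring

variable [CommSemiring R]

theorem degree_prod_le {ι : Type*} (s : Finset ι) (f : ι → R[T;T⁻¹]) :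
    (∏ i ∈ s, f i).degree ≤ ∑ i ∈ s, (f i).degree := by
  simp only [degree_eq_supDegree]
  exact AddMonoidAlgebra.supDegree_prod_le rfl fun _ _ => WithBot.coe_add _ _

theorem degree_prod_le_of_le {ι : Type*} (s : Finset ι) {f : ι → R[T;T⁻¹]} {d : ι → ℤ}
    (h : ∀ i ∈ s, (f i).degree ≤ d i) : (∏ i ∈ s, f i).degree ≤ ↑(∑ i ∈ s, d i) := by
  rw [WithBot.coe_sum]
  exact (degree_prod_le s f).trans (Finset.sum_le_sum h)

theorem coeff_prod_of_degree_le {ι : Type*} (s : Finset ι) {f : ι → R[T;T⁻¹]} {d : ι → ℤ}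
    (h : ∀ i ∈ s, (f i).degree ≤ d i) :
    (∏ i ∈ s, f i).coeff (∑ i ∈ s, d i) = ∏ i ∈ s, (f i).coeff (d i) := by
  classical
  induction s using Finset.induction_on with
  | empty => simp
  | insert i s hi ih =>
    have hs := degree_prod_le_of_le s fun j hj => h j (Finset.mem_insert_of_mem hj)
    rw [Finset.prod_insert hi, Finset.sum_insert hi, Finset.prod_insert hi,
      coeff_mul_of_degree_le (h i (Finset.mem_insert_self i s)) hs,
      ih fun j hj => h j (Finset.mem_insert_of_mem hj)]

end CommSemiring

end LaurentPolynomial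

namespace Matrix

variable {ι R : Type*} [Fintype ι] [DecidableEq ι] [CommRing R] {M : Matrix ι ι R[T;T⁻¹]}
  {a : ι → ℤ}

theorem coeff_det_eq_coeff_prod_diag (hdiag : ∀ i, (M i i).degree ≤ a i)
    (hoff : ∀ i j, i ≠ j → (M i j).degree ≤ ↑(a j - 1)) {m : ℤ} (hm : ∑ i, a i ≤ m) :
    M.det.coeff m = (∏ i, M i i).coeff m := by
  rw [det_apply, AddMonoidAlgebra.coeff_sum, Finset.sum_apply', Finset.sum_eq_single 1]
  · simp
  · intro σ _ hσ
    let d i := if σ i = i then a i else a i - 1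
    have hd : ∑ i, d i < m := by
      obtain ⟨i₀, hi₀⟩ : ∃ i, σ i ≠ i := not_forall.mp fun h => hσ (Equiv.ext h)
      refine lt_of_lt_of_le (Finset.sum_lt_sum (fun i _ => ?_) ⟨i₀, Finset.mem_univ _, ?_⟩) hm
      · unfold d; split_ifs <;> omega
      · simp [d, hi₀]
    have hprod : (∏ i, M (σ i) i).coeff m = 0 := by
      refine coeff_eq_zero_of_degree_lt ((degree_prod_le_of_le _ fun i _ => ?_).trans_lt
        (WithBot.coe_lt_coe.mpr hd))
      by_cases h : σ i = i
      · simpa [d, h] using hdiag i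
      · simpa [d, h] using hoff (σ i) i h
    rw [Units.smul_def, AddMonoidAlgebra.coeff_smul_apply, hprod, smul_zero]
  · simp

theorem degree_det_le (hdiag : ∀ i, (M i i).degree ≤ a i)
    (hoff : ∀ i j, i ≠ j → (M i j).degree ≤ ↑(a j - 1)) : M.det.degree ≤ ↑(∑ i, a i) := by
  refine degree_le_iff_coeff_eq_zero.mpr fun m hm => ?_
  rw [coeff_det_eq_coeff_prod_diag hdiag hoff hm.le]
  exact coeff_eq_zero_of_degree_lt
    ((degree_prod_le_of_le _ fun i _ => hdiag i).trans_lt (WithBot.coe_lt_coe.mpr hm))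

theorem coeff_det_sum (hdiag : ∀ i, (M i i).degree ≤ a i)
    (hoff : ∀ i j, i ≠ j → (M i j).degree ≤ ↑(a j - 1)) :
    M.det.coeff (∑ i, a i) = ∏ i, (M i i).coeff (a i) := by
  rw [coeff_det_eq_coeff_prod_diag hdiag hoff le_rfl,
    coeff_prod_of_degree_le _ fun i _ => hdiag i]

theorem invert_det (h : ∀ i j, invert (M i j) = M i j) : invert M.det = M.det := by
  rw [AlgEquiv.map_det]
  exact congrArg det (Matrix.ext h)

end Matrix

theorem degree_T_add_T_neg_le {a : ℤ} (ha : 0 ≤ a) :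
    (T a + T (-a) : ℤ[T;T⁻¹]).degree ≤ a :=
  degree_le_iff_coeff_eq_zero.mpr fun m hm => by
    simp only [AddMonoidAlgebra.coeff_add, Finsupp.add_apply, T_apply]
    split_ifs <;> omega

theorem coeff_T_add_T_neg {a : ℤ} (ha : 0 < a) : (T a + T (-a) : ℤ[T;T⁻¹]).coeff a = 1 := by
  simp only [AddMonoidAlgebra.coeff_add, Finsupp.add_apply, T_apply]
  split_ifs <;> omega

theorem degree_qint_le {l : ℤ} (hl : l ≤ 0) : (qint l).degree ≤ ↑(-l - 1) := by
  refine degree_le_iff_coeff_eq_zero.mpr fun m hm => ?_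
  rcases hl.eq_or_lt with rfl | hl
  · simp [qint]
  · rw [qint, if_neg hl.not_ge, AddMonoidAlgebra.coeff_neg, Finsupp.neg_apply,
      AddMonoidAlgebra.coeff_sum, Finset.sum_apply', neg_eq_zero]
    refine Finset.sum_eq_zero fun s _ => ?_
    rw [T_apply, if_neg (by omega)]

theorem invert_qint (l : ℤ) : invert (qint l) = qint l := by
  have hpalindrome : ∀ (k : ℕ) (l : ℤ), (k : ℤ) = l →
      invert (∑ s ∈ Finset.range k, (T (l - 1 - 2 * s) : ℤ[T;T⁻¹]))
        = ∑ s ∈ Finset.range k, T (l - 1 - 2 * s) := by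
    intro k l hk
    simp only [map_sum, invert_T]
    refine Eq.trans (Finset.sum_congr rfl fun s hs => ?_)
      (Finset.sum_range_reflect (fun s => T (l - 1 - 2 * (s : ℤ))) k)
    have := Finset.mem_range.mp hs
    congr 1
    omega
  rw [qint]
  split_ifs with hl
  · exact hpalindrome _ _ (Int.toNat_of_nonneg hl)
  · rw [map_neg, hpalindrome _ _ (Int.toNat_of_nonneg (by omega))]

noncomputable def quantizedCartanMatrix {ι : Type*} [DecidableEq ι] (C : ι → ι → ℤ)
    (r : ι → ℤ) : Matrix ι ι ℤ[T;T⁻¹] :=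
  fun i j => if i = j then T (r i) + T (-(r i)) else qint (C i j)

section QuantizedCartanMatrix

variable {ι : Type*} [DecidableEq ι] {C : ι → ι → ℤ} {r : ι → ℤ}

theorem invert_det_quantizedCartanMatrix [Fintype ι] :
    invert (quantizedCartanMatrix C r).det = (quantizedCartanMatrix C r).det := by
  refine Matrix.invert_det fun i j => ?_
  unfold quantizedCartanMatrix
  split_ifs
  · rw [map_add, invert_T, invert_T, neg_neg, add_comm]
  · exact invert_qint _

theorem degree_quantizedCartanMatrix_diag_le (hrpos : ∀ i, 0 < r i) (i : ι) :
    (quantizedCartanMatrix C r i i).degree ≤ r i := by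
  rw [quantizedCartanMatrix, if_pos rfl]
  exact degree_T_add_T_neg_le (hrpos i).le

theorem degree_quantizedCartanMatrix_le (hoff : ∀ i j, i ≠ j → C i j ≤ 0)
    (hbound : ∀ i j, -C j i ≤ r i) {i j : ι} (hij : i ≠ j) :
    (quantizedCartanMatrix C r i j).degree ≤ ↑(r j - 1) := by
  rw [quantizedCartanMatrix, if_neg hij]
  exact (degree_qint_le (hoff i j hij)).trans (WithBot.coe_le_coe.mpr (by linarith [hbound j i]))

theorem degree_det_quantizedCartanMatrix_le [Fintype ι] (hoff : ∀ i j, i ≠ j → C i j ≤ 0)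
    (hrpos : ∀ i, 0 < r i) (hbound : ∀ i j, -C j i ≤ r i) :
    (quantizedCartanMatrix C r).det.degree ≤ ↑(∑ i, r i) :=
  Matrix.degree_det_le (degree_quantizedCartanMatrix_diag_le hrpos)
    fun _ _ => degree_quantizedCartanMatrix_le hoff hbound

theorem coeff_det_quantizedCartanMatrix_sum [Fintype ι] (hoff : ∀ i j, i ≠ j → C i j ≤ 0)
    (hrpos : ∀ i, 0 < r i) (hbound : ∀ i j, -C j i ≤ r i) :
    (quantizedCartanMatrix C r).det.coeff (∑ i, r i) = 1 := by
  rw [Matrix.coeff_det_sum (degree_quantizedCartanMatrix_diag_le hrpos)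
    fun _ _ => degree_quantizedCartanMatrix_le hoff hbound]
  refine Finset.prod_eq_one fun i _ => ?_
  rw [quantizedCartanMatrix, if_pos rfl]
  exact coeff_T_add_T_neg (hrpos i)

end QuantizedCartanMatrix

theorem stmt8_general (n : ℕ) (C : Fin n → Fin n → ℤ) (r : Fin n → ℤ)
    (hoff : ∀ i j, i ≠ j → C i j ≤ 0)
    (hrpos : ∀ i, 0 < r i)
    (hbound : ∀ i j, -C j i ≤ r i) :
    ((Matrix.det (fun i j : Fin n =>
        if i = j then T (r i) + T (-(r i)) else qint (C i j))).coeff (∑ i, r i) = 1) ∧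
    ((Matrix.det (fun i j : Fin n =>
        if i = j then T (r i) + T (-(r i)) else qint (C i j))).coeff (-(∑ i, r i)) = 1) ∧
    (∀ m : ℤ, (∑ i, r i) < m →
      (Matrix.det (fun i j : Fin n =>
        if i = j then T (r i) + T (-(r i)) else qint (C i j))).coeff m = 0) ∧
    (∀ m : ℤ, m < -(∑ i, r i) →
      (Matrix.det (fun i j : Fin n =>
        if i = j then T (r i) + T (-(r i)) else qint (C i j))).coeff m = 0) ∧
    Matrix.det (fun i j : Fin n =>
        if i = j then T (r i) + T (-(r i)) else qint (C i j)) ≠ 0 := by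
  rw [show Matrix.det (fun i j : Fin n => if i = j then T (r i) + T (-(r i)) else qint (C i j))
    = (quantizedCartanMatrix C r).det from rfl]
  have htop := coeff_det_quantizedCartanMatrix_sum hoff hrpos hbound
  have hvanish :=
    degree_le_iff_coeff_eq_zero.mp (degree_det_quantizedCartanMatrix_le hoff hrpos hbound)
  have hsymm (m : ℤ) : (quantizedCartanMatrix C r).det.coeff (-m)
      = (quantizedCartanMatrix C r).det.coeff m := by
    rw [← invert_apply, invert_det_quantizedCartanMatrix]
  refine ⟨htop, (hsymm _).trans htop, hvanish, fun m hm => ?_, fun h => by simp [h] at htop⟩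
  rw [← neg_neg m, hsymm]
  exact hvanish _ (by omega)

/-- Let `C` be a symmetrizable generalized Cartan matrix with positive
integer symmetrizers `r_i`, and let `C(q)` be the quantized Cartan matrix over
`ℤ[q^{±1}]` with `C_{i,i}(q) = q^{r_i} + q^{-r_i}` and `C_{i,j}(q) = [C_{i,j}]_q` for
`i ≠ j`.  If `r_i ≥ -C_{j,i}` for all `i, j`, then `det C(q)` has leading term `q^R`
and lowest term `q^{-R}` where `R = ∑ r_i` (i.e. its coefficients at `±R` are `1` and
it vanishes beyond `±R`); in particular `det C(q) ≠ 0`. -/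
theorem stmt8 (n : ℕ) (C : Fin n → Fin n → ℤ) (r : Fin n → ℤ)
    (hdiag : ∀ i, C i i = 2)
    (hoff : ∀ i j, i ≠ j → C i j ≤ 0)
    (hzero : ∀ i j, C i j = 0 ↔ C j i = 0)
    (hrpos : ∀ i, 0 < r i)
    (hsym : ∀ i j, r i * C i j = r j * C j i)
    (hbound : ∀ i j, -C j i ≤ r i) :
    ((Matrix.det (fun i j : Fin n =>
        if i = j then T (r i) + T (-(r i)) else qint (C i j))).coeff (∑ i, r i) = 1) ∧
    ((Matrix.det (fun i j : Fin n =>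
        if i = j then T (r i) + T (-(r i)) else qint (C i j))).coeff (-(∑ i, r i)) = 1) ∧
    (∀ m : ℤ, (∑ i, r i) < m →
      (Matrix.det (fun i j : Fin n =>
        if i = j then T (r i) + T (-(r i)) else qint (C i j))).coeff m = 0) ∧
    (∀ m : ℤ, m < -(∑ i, r i) →
      (Matrix.det (fun i j : Fin n =>
        if i = j then T (r i) + T (-(r i)) else qint (C i j))).coeff m = 0) ∧
    Matrix.det (fun i j : Fin n =>
        if i = j then T (r i) + T (-(r i)) else qint (C i j)) ≠ 0 :=
  stmt8_general n C r hoff hrpos hbound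
end

section
/- Let $V$ be a finite-dimensional $\mathbb{C}(u)$-vector space spanned by finitely many vectors $f_{\lambda,k,k'}$ indexed by $\lambda \in \mathbb{C}^*$, $k \ge 0$, $k' \ge 0$ (all but finitely many zero). For $m \ge 0$ set $\mu_m = \sum_{\lambda,k,k'} \lambda^m m^k u^{-m k'} f_{\lambda,k,k'} \in V$. Then the vectors $(\mu_m)_{m \ge 0}$ span $V$. -/
/-!
Write `μ_m = ∑ a_p(m) • f_p` with `a_p(m) = β_p ^ m * m ^ k` and `β_p = λ u^{-k'}` for
`p = (λ, k, k')`; the pairs `(β_p, k)` are distinct and the `β_p` nonzero. The sequences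
`m ↦ β ^ m * m ^ k` with `β ≠ 0` are linearly independent: for distinct `β` they lie in distinct
generalized eigenspaces of the shift operator on sequences, and for fixed `β` they are independent
because a nonzero polynomial has only finitely many roots. Hence a linear form vanishing on all
`μ_m` vanishes on every `f_p`, i.e. on `V`.
-/

open Function Set Polynomial

theorem LinearIndepOn.of_iSupIndep {ι κ R M : Type*} [Ring R] [AddCommGroup M] [Module R M]
    {v : ι → M} {s : Set ι} {p : κ → Submodule R M} (hp : iSupIndep p) (g : ι → κ)
    (hv : ∀ i ∈ s, v i ∈ p (g i)) (hfib : ∀ k, LinearIndepOn R v {i ∈ s | g i = k}) :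
    LinearIndepOn R v s := by
  classical
  rw [linearIndepOn_iff']
  intro t c hts hc i hi
  have hfiber_sum : ∀ k ∈ t.image g, ∑ j ∈ t with g j = k, c j • v j = 0 := by
    refine (iSupIndep_iff_finsetSum_eq_zero_imp_eq_zero p).1 hp _ _ (fun k _ ↦ ?_) ?_
    · refine Submodule.sum_mem _ fun j hj ↦ ?_
      obtain ⟨hjt, rfl⟩ := Finset.mem_filter.1 hj
      exact Submodule.smul_mem _ _ (hv j (hts hjt))
    · rwa [Finset.sum_fiberwise_of_maps_to fun j hj ↦ Finset.mem_image_of_mem g hj]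
  refine linearIndepOn_iff'.1 (hfib (g i)) _ c (fun j hj ↦ ?_)
    (hfiber_sum _ (Finset.mem_image_of_mem g hi)) i (by simp [hi])
  obtain ⟨hjt, hj⟩ := Finset.mem_filter.1 hj
  exact ⟨hts hjt, hj⟩

section Field

variable {F : Type*} [Field F]

theorem funLeft_succ_sub_smul_pow_apply (b : F) (h : F → F) (n : ℕ) :
    ((LinearMap.funLeft F F Nat.succ - b • 1) ^ n) (fun m : ℕ ↦ b ^ m * h m) =
      fun m ↦ b ^ (m + n) * ((fwdDiff 1)^[n] h) m := by
  induction n with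
  | zero => simp
  | succ n ih =>
    funext m
    rw [pow_succ', Module.End.mul_apply, ih, iterate_succ_apply']
    simp only [LinearMap.sub_apply, LinearMap.funLeft_apply, LinearMap.smul_apply,
      Module.End.one_apply, Pi.sub_apply, Pi.smul_apply, smul_eq_mul, fwdDiff, Nat.succ_eq_add_one,
      Nat.cast_add, Nat.cast_one]
    ring

theorem geom_mul_pow_mem_maxGenEigenspace (b : F) (k : ℕ) :
    (fun m : ℕ ↦ b ^ m * (m : F) ^ k) ∈
      Module.End.maxGenEigenspace (LinearMap.funLeft F F Nat.succ) b := by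
  rw [Module.End.mem_maxGenEigenspace]
  refine ⟨k + 1, ?_⟩
  rw [funLeft_succ_sub_smul_pow_apply b (· ^ k), fwdDiff_iter_pow_eq_zero_of_lt (lt_add_one k)]
  ext m
  simp

variable [CharZero F]

theorem Polynomial.eq_zero_of_forall_eval_natCast_eq_zero {P : F[X]}
    (h : ∀ m : ℕ, P.eval (m : F) = 0) : P = 0 :=
  P.eq_zero_of_infinite_isRoot <| (Set.infinite_range_of_injective Nat.cast_injective).mono <|
    range_subset_iff.2 h

theorem linearIndependent_geom_mul_pow {b : F} (hb : b ≠ 0) :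
    LinearIndependent F (fun k : ℕ ↦ fun m : ℕ ↦ b ^ m * (m : F) ^ k) := by
  let L : F[X] →ₗ[F] ℕ → F := LinearMap.pi fun m ↦ b ^ m • Polynomial.leval (m : F)
  have hL : LinearMap.ker L = ⊥ := by
    refine LinearMap.ker_eq_bot'.2 fun P hP ↦ eq_zero_of_forall_eval_natCast_eq_zero fun m ↦ ?_
    simpa [L, hb] using congrFun hP m
  have hv : (fun k : ℕ ↦ fun m : ℕ ↦ b ^ m * (m : F) ^ k) = L ∘ basisMonomials F := by
    ext k m
    simp [L]
  rw [hv]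
  exact (basisMonomials F).linearIndependent.map' L hL

theorem linearIndepOn_geom_mul_pow :
    LinearIndepOn F (fun p : F × ℕ ↦ fun m : ℕ ↦ p.1 ^ m * (m : F) ^ p.2) {p | p.1 ≠ 0} := by
  refine .of_iSupIndep
    (Module.End.independent_maxGenEigenspace (LinearMap.funLeft F F Nat.succ)) Prod.fst (fun p _ ↦ geom_mul_pow_mem_maxGenEigenspace p.1 p.2) fun b ↦ ?_
  rcases eq_or_ne b 0 with rfl | hb
  · simp
  · have hfiber : {p : F × ℕ | p ∈ {p | p.1 ≠ 0} ∧ p.1 = b} = Prod.mk b '' univ := by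
      ext ⟨c, k⟩
      simp only [mem_ofPred_eq, mem_image, mem_univ, true_and, Prod.mk.injEq]
      grind
    rw [hfiber]
    exact .image_of_comp _ _ (linearIndepOn_univ_iff.2 (linearIndependent_geom_mul_pow hb))

end Field

theorem span_range_finsum_smul_eq_top {K V ι τ : Type*} [Field K] [AddCommGroup V] [Module K V]
    (f : ι → V) (hfin : (support f).Finite) (hspan : Submodule.span K (range f) = ⊤)
    (a : ι → τ → K) (ha : LinearIndepOn K a (support f)) :
    Submodule.span K (range fun m ↦ ∑ᶠ i, a i m • f i) = ⊤ := by
  by_contra hW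
  obtain ⟨φ, hφ, hWφ⟩ :=
    Submodule.exists_dual_map_eq_bot_of_lt_top (lt_top_iff_ne_top.2 hW) inferInstance
  have hφf : ∀ i ∈ hfin.toFinset, φ (f i) = 0 := by
    refine linearIndepOn_iff'.1 ha _ _ (by simp) (funext fun m ↦ ?_)
    have hμ : φ (∑ᶠ i, a i m • f i) = 0 := by
      rw [← Submodule.mem_bot K, ← hWφ]
      exact Submodule.mem_map_of_mem (Submodule.subset_span ⟨m, rfl⟩)
    rw [finsum_eq_sum_of_support_subset (fun i ↦ a i m • f i)
      ((support_smul_subset_right _ _).trans hfin.coe_toFinset.symm.subset)] at hμ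
    simpa [map_sum, mul_comm] using hμ
  refine hφ (LinearMap.ext_on_range hspan fun i ↦ ?_)
  by_cases hi : f i = 0
  · simp [hi]
  · exact hφf i (by simpa using hi)

theorem RatFunc.C_mul_X_zpow_neg_inj {K : Type*} [Field K] {a b : K} {j k : ℕ} (ha : a ≠ 0)
    (h : RatFunc.C a * RatFunc.X ^ (-(j : ℤ)) = RatFunc.C b * RatFunc.X ^ (-(k : ℤ))) :
    a = b ∧ j = k := by
  have hcross : RatFunc.C a * RatFunc.X ^ k = RatFunc.C b * RatFunc.X ^ j := by
    simp only [zpow_neg, zpow_natCast] at h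
    field_simp [RatFunc.X_ne_zero] at h
    linear_combination h
  have hpoly : monomial k a = monomial j b := by
    apply RatFunc.algebraMap_injective K
    simpa [← C_mul_X_pow_eq_monomial] using hcross
  obtain ⟨hkj, hab⟩ | ⟨rfl, -⟩ := monomial_eq_monomial_iff.1 hpoly
  · exact ⟨hab, hkj.symm⟩
  · exact absurd rfl ha

theorem RatFunc.C_mul_X_zpow_neg_mul {K : Type*} [Field K] (a : K) (m k j : ℕ) :
    RatFunc.C (a ^ m * (m : K) ^ k) * RatFunc.X ^ (-(m * j : ℤ)) =
      (RatFunc.C a * RatFunc.X ^ (-(j : ℤ))) ^ m * (m : RatFunc K) ^ k := by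
  have hX : (RatFunc.X : RatFunc K) ^ (-(m * j : ℤ)) = (RatFunc.X ^ (-(j : ℤ))) ^ m := by
    rw [← zpow_natCast, ← zpow_mul]
    ring_nf
  simp only [hX, map_mul, map_pow, map_natCast]
  ring

/-- Let `V` be a `ℂ(u)`-vector space spanned by finitely many vectors
`f_{λ,k,k'}` indexed by `λ ∈ ℂ*`, `k ≥ 0`, `k' ≥ 0` (all but finitely many zero,
and `f` vanishes when `λ = 0`).  For `m ≥ 0` set
`μ_m = ∑_{λ,k,k'} λ^m m^k u^{-m k'} • f_{λ,k,k'} ∈ V`.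
Then the vectors `(μ_m)_{m ≥ 0}` span `V`. -/
theorem stmt11 (V : Type*) [AddCommGroup V] [Module (RatFunc ℂ) V]
    (f : ℂ × ℕ × ℕ → V)
    (hfin : (Function.support f).Finite)
    (hunit : ∀ p : ℂ × ℕ × ℕ, p.1 = 0 → f p = 0)
    (hspan : Submodule.span (RatFunc ℂ) (Set.range f) = ⊤) :
    Submodule.span (RatFunc ℂ)
      (Set.range fun m : ℕ =>
        ∑ᶠ p : ℂ × ℕ × ℕ,
          (RatFunc.C (p.1 ^ m * (m : ℂ) ^ p.2.1) * RatFunc.X ^ (-(m * p.2.2 : ℤ))) • f p)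
      = ⊤ := by
  let ratio : ℂ × ℕ × ℕ → RatFunc ℂ := fun p ↦ RatFunc.C p.1 * RatFunc.X ^ (-(p.2.2 : ℤ))
  have hne : ∀ p ∈ support f, p.1 ≠ 0 := fun p hp h ↦ hp (hunit p h)
  have hinj : InjOn (fun p ↦ (ratio p, p.2.1)) (support f) := by
    rintro ⟨a, k, j⟩ hp ⟨b, l, i⟩ - h
    obtain ⟨hratio, rfl⟩ := Prod.mk.inj h
    obtain ⟨rfl, rfl⟩ := RatFunc.C_mul_X_zpow_neg_inj (hne _ hp) hratio
    rfl
  have hmaps : MapsTo (fun p ↦ (ratio p, p.2.1)) (support f) {q | q.1 ≠ 0} := fun p hp ↦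
    mul_ne_zero (by simpa using hne p hp) (zpow_ne_zero _ RatFunc.X_ne_zero)
  have hindep := (linearIndepOn_geom_mul_pow.mono hmaps.image_subset).comp_of_image hinj
  refine span_range_finsum_smul_eq_top f hfin hspan _ ?_
  convert hindep using 1
  ext p m
  exact RatFunc.C_mul_X_zpow_neg_mul p.1 m p.2.1 p.2.2
end
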